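/- arXiv:0906.4946 — 5 statements merged into one kernel-verified Lean document; each statement's English description precedes it below -/
import Mathlib

section
/- For any real numbers a_1, ..., a_n, the sum over all n! permutations σ of {1,...,n} of max(0, a_{σ1}, a_{σ1}+a_{σ2}, ..., a_{σ1}+...+a_{σn}) equals the sum over all permutations σ of a_{σ1} multiplied by the number of indices k in {1,...,n} with a_{σ1}+...+a_{σk} ≥ 0. -/
/-!
Kac's argument. Write `S_k σ` for the partial sums of `a ∘ σ` and `M_m σ = max_{k ≤ m} S_k σ`, so
`M_0 = 0` and it suffices to show `∑ σ, (M_p σ - M_{p-1} σ) = ∑ σ, a (σ 0) * Θ (S_p σ)` for each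
`1 ≤ p ≤ n`. Replace `σ` by `σ ∘ ρ^i`, where `ρ` cycles the first `p` positions, and average over
`i < p`. On the right, `S_p` is invariant under `ρ` and the first entries of the `p` rotations add
up to `S_p σ`; on the left, the cyclic lemma evaluates the averaged sum. Both sides thus become
`∑ σ, max (S_p σ) 0`.
-/

open Finset Equiv

section PrefixMax

variable {α : Type*} [LinearOrder α]

def prefixMax (S : ℕ → α) (m : ℕ) : α :=
  (range (m + 1)).sup' nonempty_range_add_one S

lemma prefixMax_zero (S : ℕ → α) : prefixMax S 0 = S 0 := by
  simp [prefixMax]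

lemma le_prefixMax (S : ℕ → α) {k m : ℕ} (h : k ≤ m) : S k ≤ prefixMax S m :=
  le_sup' S (mem_range.2 (Nat.lt_succ_of_le h))

lemma prefixMax_congr {S S' : ℕ → α} {m : ℕ} (h : ∀ k ≤ m, S k = S' k) :
    prefixMax S m = prefixMax S' m :=
  sup'_congr _ rfl fun k hk => h k (Nat.lt_succ_iff.1 (mem_range.1 hk))

lemma prefixMax_succ (S : ℕ → α) (m : ℕ) :
    prefixMax S (m + 1) = max (prefixMax S m) (S (m + 1)) := by
  rw [prefixMax, prefixMax, sup'_congr _ (range_add_one (n := m + 1)) fun _ _ => rfl, sup'_insert,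
    max_comm]

lemma prefixMax_succ' (S : ℕ → α) (m : ℕ) :
    prefixMax S (m + 1) = max (S 0) (prefixMax (fun k => S (k + 1)) m) := by
  rw [prefixMax, prefixMax, sup'_congr _ (range_add_one' (m + 1)) fun _ _ => rfl,
    sup'_insert (H := by simp), sup'_map]
  rfl

variable [AddCommGroup α] [IsOrderedAddMonoid α]

lemma prefixMax_add_const (S : ℕ → α) (m : ℕ) (c : α) :
    prefixMax (fun k => S k + c) m = prefixMax S m + c :=
  (sup'_add _ _ _ _).symm

lemma prefixMax_sub_const (S : ℕ → α) (m : ℕ) (c : α) :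
    prefixMax (fun k => S k - c) m = prefixMax S m - c := by
  simp only [sub_eq_add_neg, prefixMax_add_const]

/-- Kac's cyclic lemma. With `W i` the maximum of `S` on `[i, i + m]`, the `i`-th term vanishes
when `S (m + 1) ≤ 0` and equals `W (i + 1) - W i` otherwise. -/
theorem sum_range_prefixMax_succ_sub_prefixMax (S : ℕ → α) (m : ℕ)
    (hS : ∀ t, S (t + (m + 1)) = S t + S (m + 1)) :
    ∑ i ∈ range (m + 1),
        (prefixMax (fun k => S (i + k)) (m + 1) - prefixMax (fun k => S (i + k)) m) =
      max (S (m + 1)) 0 := by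
  set T := S (m + 1)
  set W : ℕ → α := fun i => prefixMax (fun k => S (i + k)) m with hW
  have hS_le : ∀ i, S i ≤ W i := fun i => le_prefixMax (fun k => S (i + k)) (Nat.zero_le m)
  have hW_succ : ∀ i, prefixMax (fun k => S (i + (k + 1))) m = W (i + 1) := fun i => by
    simp only [hW, add_assoc, add_comm 1]
  have hlast_le : ∀ i, S (i + (m + 1)) ≤ W (i + 1) := fun i => by
    rw [← hW_succ]
    exact le_prefixMax (fun k => S (i + (k + 1))) le_rfl
  rcases le_or_gt T 0 with hT | hT
  · rw [max_eq_right hT]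
    refine sum_eq_zero fun i _ => ?_
    rw [prefixMax_succ, sub_eq_zero, max_eq_left]
    calc S (i + (m + 1)) = S i + T := hS i
      _ ≤ S i := add_le_of_nonpos_right hT
      _ ≤ W i := hS_le i
  · have hstep : ∀ i, prefixMax (fun k => S (i + k)) (m + 1) = W (i + 1) := fun i => by
      rw [prefixMax_succ', hW_succ, max_eq_right]
      calc S (i + 0) = S i := rfl
        _ ≤ S i + T := le_add_of_nonneg_right hT.le
        _ = S (i + (m + 1)) := (hS i).symm
        _ ≤ W (i + 1) := hlast_le i
    have hperiod : W (m + 1) = W 0 + T := by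
      rw [hW, ← prefixMax_add_const]
      exact prefixMax_congr fun k _ => by rw [add_comm, hS, zero_add]
    simp only [hstep]
    rw [sum_range_sub W, hperiod, add_sub_cancel_left, max_eq_left hT.le]

end PrefixMax

namespace Fin

lemma coe_cycleRange_pow_of_le {n : ℕ} {r j : Fin n} (hj : j ≤ r) (i : ℕ) :
    ((cycleRange r ^ i) j : ℕ) = (j + i) % (r + 1) := by
  induction i with
  | zero => exact (Nat.mod_eq_of_lt (Nat.lt_succ_of_le hj)).symm
  | succ i ih =>
    have hle : (cycleRange r ^ i) j ≤ r :=
      Fin.le_def.2 (ih ▸ Nat.le_of_lt_succ (Nat.mod_lt _ r.val.succ_pos))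
    rw [pow_succ', Perm.mul_apply, coe_cycleRange_of_le hle, ← add_assoc, ← Nat.mod_add_mod, ← ih]
    split_ifs with h
    · rw [h, Nat.mod_self]
    · exact (Nat.mod_eq_of_lt (Nat.succ_lt_succ (Fin.lt_def.1 (lt_of_le_of_ne hle h)))).symm


end Fin

section PartialSum

variable {α : Type*} {n : ℕ}

def partialSum [AddCommMonoid α] (f : Fin n → α) (k : ℕ) : α :=
  ∑ j ∈ univ.filter (fun j : Fin n => (j : ℕ) < k), f j

lemma partialSum_zero [AddCommMonoid α] (f : Fin n → α) : partialSum f 0 = 0 := by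
  simp [partialSum]

-- The partial sums of every cyclic rotation of `f 0, …, f r` are differences of partial sums of
-- this one sequence.
def periodicExtension (f : Fin n → α) (r : Fin n) (t : ℕ) : α :=
  f ⟨t % (r + 1), (Nat.mod_lt _ r.val.succ_pos).trans_le r.isLt⟩

lemma sum_filter_val_lt [AddCommMonoid α] (g : ℕ → α) {k : ℕ} (hk : k ≤ n) :
    ∑ j ∈ univ.filter (fun j : Fin n => (j : ℕ) < k), g j = ∑ u ∈ range k, g u := by
  rw [sum_filter, Fin.sum_univ_eq_sum_range (fun u => if u < k then g u else 0), ← sum_filter]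
  congr 1
  ext u
  simp only [mem_filter, mem_range]
  omega

variable [AddCommGroup α]

lemma partialSum_comp_cycleRange_pow (f : Fin n → α) (r : Fin n) (i : ℕ) {k : ℕ}
    (hk : k ≤ r + 1) :
    partialSum (f ∘ ⇑(Fin.cycleRange r ^ i)) k =
      ∑ u ∈ range (i + k), periodicExtension f r u - ∑ u ∈ range i, periodicExtension f r u := by
  rw [sum_range_add, add_sub_cancel_left, ← sum_filter_val_lt _ (hk.trans r.isLt), partialSum]
  refine sum_congr rfl fun j hj => congrArg f (Fin.ext ?_)
  have hjr : j ≤ r := Fin.le_def.2 (Nat.le_of_lt_succ ((mem_filter.1 hj).2.trans_le hk))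
  rw [Fin.coe_cycleRange_pow_of_le hjr, add_comm]

lemma sum_range_periodicExtension_add_period (f : Fin n → α) (r : Fin n) (t : ℕ) :
    ∑ u ∈ range (t + (r + 1)), periodicExtension f r u =
      ∑ u ∈ range t, periodicExtension f r u + ∑ u ∈ range (r + 1), periodicExtension f r u := by
  rw [add_comm t, sum_range_add, add_comm]
  congr 1
  refine sum_congr rfl fun u _ => ?_
  simp only [periodicExtension, Nat.add_mod_left]

lemma sum_range_periodicExtension_period (f : Fin n → α) (r : Fin n) :
    ∑ u ∈ range (r + 1), periodicExtension f r u = partialSum f (r + 1) := by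
  simpa using (partialSum_comp_cycleRange_pow f r 0 le_rfl).symm

lemma partialSum_comp_cycleRange_pow_self (f : Fin n → α) (r : Fin n) (i : ℕ) :
    partialSum (f ∘ ⇑(Fin.cycleRange r ^ i)) (r + 1) = partialSum f (r + 1) := by
  rw [partialSum_comp_cycleRange_pow f r i le_rfl, sum_range_periodicExtension_add_period,
    add_sub_cancel_left, sum_range_periodicExtension_period]

end PartialSum

section Rotation

variable {α : Type*} {n : ℕ}

lemma sum_range_prefixMax_partialSum_comp_cycleRange_pow [AddCommGroup α] [LinearOrder α]
    [IsOrderedAddMonoid α] (f : Fin n → α) (r : Fin n) :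
    ∑ i ∈ range (r + 1),
        (prefixMax (fun k => partialSum (f ∘ ⇑(Fin.cycleRange r ^ i)) k) (r + 1) -
          prefixMax (fun k => partialSum (f ∘ ⇑(Fin.cycleRange r ^ i)) k) r) =
      max (partialSum f (r + 1)) 0 := by
  set S : ℕ → α := fun t => ∑ u ∈ range t, periodicExtension f r u
  have hprefix : ∀ i {m : ℕ}, m ≤ r + 1 →
      prefixMax (fun k => partialSum (f ∘ ⇑(Fin.cycleRange r ^ i)) k) m =
        prefixMax (fun k => S (i + k)) m - S i := fun i m hm => by
    rw [← prefixMax_sub_const]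
    exact prefixMax_congr fun k hk => partialSum_comp_cycleRange_pow f r i (hk.trans hm)
  simp only [hprefix _ le_rfl, hprefix _ (Nat.le_succ _), sub_sub_sub_cancel_right]
  rw [sum_range_prefixMax_succ_sub_prefixMax S r (sum_range_periodicExtension_add_period f r)]
  exact congrArg (max · 0) (sum_range_periodicExtension_period f r)

lemma mul_ite_nonneg_eq_max [Ring α] [LinearOrder α] (x : α) :
    x * (if 0 ≤ x then 1 else 0) = max x 0 := by
  split_ifs with hx
  · rw [mul_one, max_eq_left hx]
  · rw [mul_zero, max_eq_right (le_of_not_ge hx)]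

lemma sum_range_mul_ite_partialSum_comp_cycleRange_pow [Ring α] [LinearOrder α]
    (f : Fin n → α) (r : Fin n) :
    ∑ i ∈ range (r + 1), f ((Fin.cycleRange r ^ i) ⟨0, r.pos⟩) *
        (if 0 ≤ partialSum (f ∘ ⇑(Fin.cycleRange r ^ i)) (r + 1) then 1 else 0) =
      max (partialSum f (r + 1)) 0 := by
  have hfirst : ∀ i, f ((Fin.cycleRange r ^ i) ⟨0, r.pos⟩) = periodicExtension f r i := fun i =>
    congrArg f <| Fin.ext <| by
      rw [Fin.coe_cycleRange_pow_of_le (Fin.le_def.2 (Nat.zero_le r)), zero_add]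
  simp only [partialSum_comp_cycleRange_pow_self, hfirst, ← sum_mul,
    sum_range_periodicExtension_period, mul_ite_nonneg_eq_max]

end Rotation

lemma sum_sum_range_mul_pow {G β : Type*} [Group G] [Fintype G] [AddCommMonoid β] (f : G → β)
    (τ : G) (p : ℕ) :
    ∑ g, ∑ i ∈ range p, f (g * τ ^ i) = p • ∑ g, f g := by
  rw [sum_comm]
  calc _ = ∑ _i ∈ range p, ∑ g, f g :=
        sum_congr rfl fun i _ => Equiv.sum_comp (Equiv.mulRight (τ ^ i)) f
    _ = p • ∑ g, f g := by rw [sum_const, card_range]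

section Dyson

variable {α : Type*} [Field α] [LinearOrder α] [IsStrictOrderedRing α] {n : ℕ}

theorem sum_perm_prefixMax_partialSum_succ_sub (a : Fin n → α) {m : ℕ} (hm : m < n) :
    ∑ σ : Perm (Fin n),
        (prefixMax (fun k => partialSum (a ∘ ⇑σ) k) (m + 1) -
          prefixMax (fun k => partialSum (a ∘ ⇑σ) k) m) =
      ∑ σ : Perm (Fin n),
        a (σ ⟨0, hm.pos⟩) * if 0 ≤ partialSum (a ∘ ⇑σ) (m + 1) then 1 else 0 := by
  set τ := Fin.cycleRange (⟨m, hm⟩ : Fin n)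
  refine mul_left_cancel₀ (Nat.cast_ne_zero.2 m.succ_ne_zero : ((m + 1 : ℕ) : α) ≠ 0) ?_
  simp only [← nsmul_eq_mul, ← sum_sum_range_mul_pow _ τ (m + 1), Perm.coe_mul,
    ← Function.comp_assoc]
  calc _ = ∑ σ : Perm (Fin n), max (partialSum (a ∘ ⇑σ) (m + 1)) 0 :=
        sum_congr rfl fun σ _ => sum_range_prefixMax_partialSum_comp_cycleRange_pow (a ∘ ⇑σ) ⟨m, hm⟩
    _ = _ := sum_congr rfl fun σ _ =>
        (sum_range_mul_ite_partialSum_comp_cycleRange_pow (a ∘ ⇑σ) ⟨m, hm⟩).symm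

end Dyson

/-- Dyson's combinatorial identity (Kac): the sum over all permutations of the
maximum of `0` and the partial sums equals the sum over all permutations of the
first term times the number of nonnegative partial sums. -/
theorem dyson_identity (n : ℕ) (hn : 0 < n) (a : Fin n → ℝ) :
    ∑ σ : Equiv.Perm (Fin n),
      (Finset.range (n + 1)).sup' (Finset.nonempty_range_iff.2 (Nat.succ_ne_zero n))
        (fun k => ∑ j ∈ Finset.univ.filter (fun j : Fin n => (j : ℕ) < k), a (σ j))
    = ∑ σ : Equiv.Perm (Fin n),
        a (σ ⟨0, hn⟩) *
          ∑ k ∈ Finset.Icc 1 n,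
            (if 0 ≤ ∑ j ∈ Finset.univ.filter (fun j : Fin n => (j : ℕ) < k), a (σ j)
              then (1 : ℝ) else 0) := by
  set M : Perm (Fin n) → ℕ → ℝ := fun σ => prefixMax fun k => partialSum (a ∘ ⇑σ) k
  set θ : Perm (Fin n) → ℕ → ℝ := fun σ k => if 0 ≤ partialSum (a ∘ ⇑σ) k then 1 else 0
  have hM_zero : ∀ σ, M σ 0 = 0 := fun σ => by simp only [M, prefixMax_zero, partialSum_zero]
  calc ∑ σ, M σ n = ∑ σ, ∑ m ∈ range n, (M σ (m + 1) - M σ m) := sum_congr rfl fun σ _ => by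
        rw [sum_range_sub (M σ), hM_zero, sub_zero]
    _ = ∑ m ∈ range n, ∑ σ, a (σ ⟨0, hn⟩) * θ σ (m + 1) := by
        rw [sum_comm]
        exact sum_congr rfl fun m hm => sum_perm_prefixMax_partialSum_succ_sub a (mem_range.1 hm)
    _ = ∑ k ∈ Icc 1 n, ∑ σ, a (σ ⟨0, hn⟩) * θ σ k := by
        rw [← Ico_add_one_right_eq_Icc, sum_Ico_eq_sum_range, Nat.add_sub_cancel]
        simp only [add_comm 1]
    _ = ∑ σ, a (σ ⟨0, hn⟩) * ∑ k ∈ Icc 1 n, θ σ k := by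
        simp only [mul_sum]
        exact sum_comm
end

section
/- For any real numbers a_1, ..., a_n, the sum over all n! permutations σ of {1,...,n} of max(0, a_{σ1}, a_{σ1}+a_{σ2}, ..., a_{σ1}+...+a_{σn}) equals the sum over all permutations σ of ∑_{ℓ=1}^n (1/ℓ) max(0, a_{σ1}+...+a_{σℓ}). -/
/-!
Write `S_ℓ(σ)` for the partial sums and `M_k(σ) = max(0, S_1(σ), …, S_k(σ))`. It suffices to show
`∑_σ M_{k+1}(σ) = ∑_σ M_k(σ) + (k+1)⁻¹ ∑_σ max(0, S_{k+1}(σ))`. If `S_{k+1}(σ) < 0` the new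
partial sum does not change the maximum. If `S_{k+1}(σ) ≥ 0`, splitting off the first summand gives
`M_{k+1}(σ) = a_{σ1} + M_k(σ ∘ c)`, where `c` cycles the first `k+1` positions. Both `c` and the
transpositions of these positions preserve `S_{k+1}`, so summing over `{σ | S_{k+1}(σ) ≥ 0}` the
term `M_k(σ ∘ c)` contributes `∑ M_k(σ)`, and `a_{σ1}` contributes the average
`(k+1)⁻¹ ∑ S_{k+1}(σ)` of the `k+1` equally distributed summands `a_{σj}`.
-/

open Finset Equiv

lemma partialSups_congr {α ι : Type*} [SemilatticeSup α] [Preorder ι] [LocallyFiniteOrderBot ι]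
    {f g : ι → α} {i : ι} (h : ∀ j ≤ i, f j = g j) : partialSups f i = partialSups g i := by
  simp_rw [partialSups_apply]
  exact sup'_congr _ rfl fun j hj => h j (mem_Iic.1 hj)

namespace Widom

variable {R : Type*} {n : ℕ}

section PrefixSum

variable [AddCommMonoid R]

def prefixSum (a : Fin n → R) (σ : Perm (Fin n)) (k : ℕ) : R :=
  ∑ j ∈ univ.filter (fun j : Fin n => (j : ℕ) < k), a (σ j)

@[simp]
lemma prefixSum_zero (a : Fin n → R) (σ : Perm (Fin n)) : prefixSum a σ 0 = 0 := by
  simp [prefixSum]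

lemma prefixSum_succ (a : Fin n → R) (σ : Perm (Fin n)) {k : ℕ} (hk : k < n) :
    prefixSum a σ (k + 1) = prefixSum a σ k + a (σ ⟨k, hk⟩) := by
  have h : univ.filter (fun j : Fin n => (j : ℕ) < k + 1)
      = insert ⟨k, hk⟩ (univ.filter fun j : Fin n => (j : ℕ) < k) := by
    ext j
    simp only [Order.lt_add_one_iff, mem_filter, mem_univ, true_and, mem_insert, Fin.ext_iff]
    omega
  rw [prefixSum, h, sum_insert (by simp), add_comm, prefixSum]

lemma prefixSum_mul_of_forall_lt_iff {τ : Perm (Fin n)} {m : ℕ}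
    (hτ : ∀ i, (τ i : ℕ) < m ↔ (i : ℕ) < m) (a : Fin n → R) (σ : Perm (Fin n)) :
    prefixSum a (σ * τ) m = prefixSum a σ m :=
  sum_bijective τ τ.bijective (fun i => by simp [hτ i]) (fun _ _ => rfl)

lemma val_cycleRange_lt_succ_iff (k i : Fin n) :
    (k.cycleRange i : ℕ) < k + 1 ↔ (i : ℕ) < k + 1 := by
  rcases lt_or_ge k i with h | h
  · rw [Fin.cycleRange_of_gt h]
  · have : (i : ℕ) ≤ k := h
    rw [Fin.coe_cycleRange_of_le h]
    split_ifs <;> omega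

lemma val_swap_lt_iff {i j : Fin n} {m : ℕ} (hi : (i : ℕ) < m) (hj : (j : ℕ) < m) (x : Fin n) :
    (swap i j x : ℕ) < m ↔ (x : ℕ) < m := by
  rcases eq_or_ne x i with rfl | hxi
  · simp [hi, hj]
  rcases eq_or_ne x j with rfl | hxj
  · simp [hi, hj]
  rw [swap_apply_of_ne_of_ne hxi hxj]

lemma prefixSum_mul_cycleRange_add [NeZero n] (a : Fin n → R) (σ : Perm (Fin n)) (k : Fin n)
    {ℓ : ℕ} (hℓ : ℓ ≤ k) :
    prefixSum a (σ * k.cycleRange) ℓ + a (σ 0) = prefixSum a σ (ℓ + 1) := by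
  induction ℓ with
  | zero => simp [prefixSum_succ a σ (Nat.pos_of_neZero n)]
  | succ ℓ ih =>
    have hℓk : ℓ < k := hℓ
    have hc : k.cycleRange ⟨ℓ, hℓk.trans k.isLt⟩ = ⟨ℓ + 1, hℓ.trans_lt k.isLt⟩ :=
      Fin.ext (Fin.coe_cycleRange_of_lt hℓk)
    rw [prefixSum_succ a _ (hℓk.trans k.isLt), Perm.mul_apply, hc,
      prefixSum_succ a σ (hℓ.trans_lt k.isLt), ← ih hℓk.le, add_right_comm]

end PrefixSum

section PrefixMax

variable [AddCommMonoid R] [LinearOrder R]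

def prefixMax (a : Fin n → R) (σ : Perm (Fin n)) (k : ℕ) : R :=
  partialSups (prefixSum a σ) k

lemma prefixSum_le_prefixMax (a : Fin n → R) (σ : Perm (Fin n)) {ℓ k : ℕ} (hℓ : ℓ ≤ k) :
    prefixSum a σ ℓ ≤ prefixMax a σ k :=
  le_partialSups_of_le _ hℓ

lemma prefixMax_nonneg (a : Fin n → R) (σ : Perm (Fin n)) (k : ℕ) : 0 ≤ prefixMax a σ k := by
  simpa using prefixSum_le_prefixMax a σ k.zero_le

lemma prefixMax_succ_of_neg (a : Fin n → R) (σ : Perm (Fin n)) (k : ℕ)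
    (h : prefixSum a σ (k + 1) < 0) : prefixMax a σ (k + 1) = prefixMax a σ k := by
  rw [prefixMax, partialSups_add_one]
  exact max_eq_left (h.le.trans (prefixMax_nonneg a σ k))

end PrefixMax

section Rotation

variable [AddCommGroup R] [LinearOrder R] [IsOrderedAddMonoid R]

lemma prefixMax_succ_eq_max_zero [NeZero n] (a : Fin n → R) (σ : Perm (Fin n)) (k : Fin n) :
    prefixMax a σ (k + 1) = max 0 (a (σ 0) + prefixMax a (σ * k.cycleRange) k) := by
  rw [prefixMax, partialSups_add_one', Nat.bot_eq_zero, prefixSum_zero, prefixMax,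
    ← OrderIso.addLeft_apply (a (σ 0)), ← map_partialSups]
  congr 1
  refine partialSups_congr fun ℓ hℓ => ?_
  rw [Function.comp_apply, OrderIso.addLeft_apply, add_comm (a _),
    prefixSum_mul_cycleRange_add a σ k hℓ]

lemma prefixMax_succ_of_nonneg [NeZero n] (a : Fin n → R) (σ : Perm (Fin n)) (k : Fin n)
    (h : 0 ≤ prefixSum a σ (k + 1)) :
    prefixMax a σ (k + 1) = a (σ 0) + prefixMax a (σ * k.cycleRange) k := by
  refine (prefixMax_succ_eq_max_zero a σ k).trans (max_eq_right ?_)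
  calc 0 ≤ prefixSum a σ (k + 1) := h
    _ = a (σ 0) + prefixSum a (σ * k.cycleRange) k := by
      rw [← prefixSum_mul_cycleRange_add a σ k le_rfl, add_comm]
    _ ≤ a (σ 0) + prefixMax a (σ * k.cycleRange) k := by
      grw [prefixSum_le_prefixMax a _ le_rfl]

end Rotation

section Symmetry

variable [AddCommMonoid R] (a : Fin n → R) (p : R → Prop) [DecidablePred p] {m : ℕ}

lemma sum_filter_mul_of_forall_lt_iff {M : Type*} [AddCommMonoid M] {τ : Perm (Fin n)}
    (hτ : ∀ i, (τ i : ℕ) < m ↔ (i : ℕ) < m) (f : Perm (Fin n) → M) :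
    ∑ σ ∈ univ.filter (fun σ => p (prefixSum a σ m)), f (σ * τ)
      = ∑ σ ∈ univ.filter (fun σ => p (prefixSum a σ m)), f σ :=
  sum_equiv (Equiv.mulRight τ) (fun σ => by simp [prefixSum_mul_of_forall_lt_iff hτ])
    fun _ _ => rfl

lemma sum_filter_apply_eq_of_lt {i j : Fin n} (hi : (i : ℕ) < m) (hj : (j : ℕ) < m) :
    ∑ σ ∈ univ.filter (fun σ => p (prefixSum a σ m)), a (σ i)
      = ∑ σ ∈ univ.filter (fun σ => p (prefixSum a σ m)), a (σ j) := by
  simpa using (sum_filter_mul_of_forall_lt_iff a p (val_swap_lt_iff hi hj) (fun σ => a (σ i))).symm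

lemma sum_filter_prefixSum [NeZero n] (k : Fin n) :
    ∑ σ ∈ univ.filter (fun σ => p (prefixSum a σ (k + 1))), prefixSum a σ (k + 1)
      = ((k : ℕ) + 1) • ∑ σ ∈ univ.filter (fun σ => p (prefixSum a σ (k + 1))), a (σ 0) := by
  have hprefix : univ.filter (fun j : Fin n => (j : ℕ) < k + 1) = Iic k :=
    Finset.ext fun j => by
      simp only [mem_filter, mem_univ, true_and, mem_Iic, Fin.le_def]
      omega
  calc _ = ∑ j ∈ univ.filter (fun j : Fin n => (j : ℕ) < k + 1),
        ∑ σ ∈ univ.filter (fun σ => p (prefixSum a σ (k + 1))), a (σ j) := sum_comm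
    _ = ∑ j ∈ univ.filter (fun j : Fin n => (j : ℕ) < k + 1),
        ∑ σ ∈ univ.filter (fun σ => p (prefixSum a σ (k + 1))), a (σ 0) :=
      sum_congr rfl fun j hj => sum_filter_apply_eq_of_lt a p (mem_filter.1 hj).2 (by simp)
    _ = _ := by rw [sum_const, hprefix, Fin.card_Iic]

end Symmetry

section Field

variable [Field R] [LinearOrder R] [IsStrictOrderedRing R]

lemma sum_prefixMax_succ [NeZero n] (a : Fin n → R) (k : Fin n) :
    ∑ σ, prefixMax a σ (k + 1)
      = ∑ σ, prefixMax a σ k + ((k + 1 : ℕ) : R)⁻¹ * ∑ σ, max 0 (prefixSum a σ (k + 1)) := by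
  have hpos : ∑ σ ∈ univ.filter (fun σ => 0 ≤ prefixSum a σ (k + 1)), prefixMax a σ (k + 1)
      = ∑ σ ∈ univ.filter (fun σ => 0 ≤ prefixSum a σ (k + 1)), a (σ 0)
        + ∑ σ ∈ univ.filter (fun σ => 0 ≤ prefixSum a σ (k + 1)), prefixMax a σ k := by
    rw [sum_congr rfl fun σ hσ => prefixMax_succ_of_nonneg a σ k (mem_filter.1 hσ).2,
      sum_add_distrib, sum_filter_mul_of_forall_lt_iff a (0 ≤ ·) (val_cycleRange_lt_succ_iff k)
        (prefixMax a · k)]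
  have hneg : ∑ σ ∈ univ.filter (fun σ => ¬0 ≤ prefixSum a σ (k + 1)), prefixMax a σ (k + 1)
      = ∑ σ ∈ univ.filter (fun σ => ¬0 ≤ prefixSum a σ (k + 1)), prefixMax a σ k :=
    sum_congr rfl fun σ hσ => prefixMax_succ_of_neg a σ k (not_le.1 (mem_filter.1 hσ).2)
  have hmax : ∑ σ, max 0 (prefixSum a σ (k + 1))
      = ((k + 1 : ℕ) : R) * ∑ σ ∈ univ.filter (fun σ => 0 ≤ prefixSum a σ (k + 1)), a (σ 0) := by
    rw [← nsmul_eq_mul, ← sum_filter_prefixSum a (0 ≤ ·) k, sum_filter]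
    exact sum_congr rfl fun σ _ => max_def _ _
  rw [← sum_filter_add_sum_filter_not univ (fun σ => 0 ≤ prefixSum a σ (k + 1)),
    ← sum_filter_add_sum_filter_not univ (fun σ => 0 ≤ prefixSum a σ (k + 1)) (prefixMax a · k),
    hpos, hneg, hmax, inv_mul_cancel_left₀ (Nat.cast_ne_zero.2 k.val.succ_ne_zero)]
  ring

lemma sum_prefixMax_eq (a : Fin n → R) {k : ℕ} (hk : k ≤ n) :
    ∑ σ, prefixMax a σ k = ∑ σ, ∑ ℓ ∈ Icc 1 k, (ℓ : R)⁻¹ * max 0 (prefixSum a σ ℓ) := by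
  induction k with
  | zero => simp [prefixMax]
  | succ k ih =>
    have : NeZero n := ⟨by omega⟩
    have step := sum_prefixMax_succ a (⟨k, hk⟩ : Fin n)
    dsimp only at step
    rw [step, ih (by omega), mul_sum, ← sum_add_distrib]
    refine sum_congr rfl fun σ _ => ?_
    rw [sum_Icc_succ_top (by omega)]

end Field

end Widom

/-- Widom's combinatorial lemma: the sum over all permutations of the maximum of `0`
and the partial sums equals the sum over all permutations of
`∑_{ℓ=1}^n (1/ℓ) max(0, a_{σ1}+...+a_{σℓ})`. -/
theorem widom_combinatorial_lemma (n : ℕ) (a : Fin n → ℝ) :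
    ∑ σ : Equiv.Perm (Fin n),
      (Finset.range (n + 1)).sup' (Finset.nonempty_range_iff.2 (Nat.succ_ne_zero n))
        (fun k => ∑ j ∈ Finset.univ.filter (fun j : Fin n => (j : ℕ) < k), a (σ j))
    = ∑ σ : Equiv.Perm (Fin n),
        ∑ ℓ ∈ Finset.Icc 1 n,
          (1 / (ℓ : ℝ)) *
            max 0 (∑ j ∈ Finset.univ.filter (fun j : Fin n => (j : ℕ) < ℓ), a (σ j)) := by
  simp only [one_div, ← partialSups_eq_sup'_range]
  exact Widom.sum_prefixMax_eq a le_rfl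
end

section
/- Define η(t) = -t·ln(t) - (1-t)·ln(1-t) for t ∈ (0,1) and η(0) = η(1) = 0. Then for all t ∈ [0,1], the chain of inequalities 2t(1-t) ≤ η_2(t) ≤ (4 ln 2)·t(1-t) ≤ η(t) holds, where η_2(t) = -ln(t² + (1-t)²). -/
/-!
The first two inequalities are `-log s ≥ 1 - s` and the chord bound for the concave `log`
on `[1/2, 1]`, applied to `s = t² + (1-t)² = 1 - 2t(1-t)`.

For the third, put `x = 1 - 2t`, so that `x² = 1 - 4t(1-t)` and
`ψ(x) = (1+x) log(1+x) + (1-x) log(1-x) = 2 log 2 - 2η(t)` (`ψ = entropyGap` below); it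
becomes `ψ(x) ≤ ψ(1) x²`. Combining the series of `log(1-x²)` and `log(1+x) - log(1-x)` gives
`ψ(x) = ∑ x^(2k+2) / ((2k+1)(k+1))`, with nonnegative coefficients, so `ψ(x)/x²` is
increasing in `|x|`, and letting `|x| → 1` gives the bound.
-/

open Real Set Filter Topology

namespace EntropyChain

noncomputable def entropyGap (x : ℝ) : ℝ :=
  (1 + x) * log (1 + x) + (1 - x) * log (1 - x)

lemma continuous_entropyGap : Continuous entropyGap :=
  (continuous_mul_log.comp (continuous_const.add continuous_id)).add
    (continuous_mul_log.comp (continuous_const.sub continuous_id))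

lemma entropyGap_one : entropyGap 1 = 2 * log 2 := by
  norm_num [entropyGap]

lemma entropyGap_neg_one : entropyGap (-1) = 2 * log 2 := by
  norm_num [entropyGap]

lemma hasSum_entropyGap {x : ℝ} (hx : |x| < 1) :
    HasSum (fun k : ℕ => (x ^ 2) ^ (k + 1) / ((2 * k + 1) * (k + 1))) (entropyGap x) := by
  have hx2 : |x ^ 2| < 1 := by
    rw [abs_pow]; exact pow_lt_one₀ (abs_nonneg x) hx two_ne_zero
  have hodd := (hasSum_log_sub_log_of_abs_lt_one hx).mul_left x
  have heven := hasSum_pow_div_log_of_abs_lt_one hx2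
  have hlog : log (1 + x) + log (1 - x) = log (1 - x ^ 2) := by
    rw [← log_mul (by linarith [neg_abs_le x]) (by linarith [le_abs_self x])]
    ring_nf
  have hgap : entropyGap x = x * (log (1 + x) - log (1 - x)) - -log (1 - x ^ 2) := by
    rw [entropyGap, sub_neg_eq_add, ← hlog]
    ring
  rw [hgap]
  refine (hodd.sub heven).congr_fun fun k => ?_
  field_simp
  ring

lemma entropyGap_mul_sq_le {x y : ℝ} (hxy : |x| ≤ |y|) (hy : |y| < 1) :
    entropyGap x * y ^ 2 ≤ entropyGap y * x ^ 2 := by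
  have hsq : x ^ 2 ≤ y ^ 2 := sq_le_sq.2 hxy
  refine hasSum_le (fun k => ?_) ((hasSum_entropyGap (hxy.trans_lt hy)).mul_right _)
    ((hasSum_entropyGap hy).mul_right _)
  calc (x ^ 2) ^ (k + 1) / ((2 * k + 1) * (k + 1)) * y ^ 2
      = (x ^ 2) ^ k * (x ^ 2 * y ^ 2) / ((2 * k + 1) * (k + 1)) := by ring
    _ ≤ (y ^ 2) ^ k * (x ^ 2 * y ^ 2) / ((2 * k + 1) * (k + 1)) := by gcongr
    _ = (y ^ 2) ^ (k + 1) / ((2 * k + 1) * (k + 1)) * x ^ 2 := by ring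

lemma entropyGap_le {x : ℝ} (hx : |x| ≤ 1) : entropyGap x ≤ 2 * log 2 * x ^ 2 := by
  rcases hx.lt_or_eq with hx | hx
  · have hlim {f : ℝ → ℝ} (hf : Continuous f) : Tendsto f (𝓝[<] 1) (𝓝 (f 1)) :=
      (hf.tendsto 1).mono_left nhdsWithin_le_nhds
    have hle : entropyGap x * 1 ^ 2 ≤ entropyGap 1 * x ^ 2 :=
      le_of_tendsto_of_tendsto (hlim (continuous_const.mul (continuous_pow 2)))
        (hlim (continuous_entropyGap.mul continuous_const))
        (by
          filter_upwards [Ioo_mem_nhdsLT hx] with y hy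
          have hy0 : |y| = y := abs_of_pos ((abs_nonneg x).trans_lt hy.1)
          exact entropyGap_mul_sq_le (hy0.symm ▸ hy.1.le) (hy0.symm ▸ hy.2))
    simpa [entropyGap_one] using hle
  · rcases (abs_eq zero_le_one).1 hx with rfl | rfl <;>
      simp [entropyGap_one, entropyGap_neg_one]

lemma two_mul_mul_log_two_mul (a : ℝ) :
    2 * a * log (2 * a) = 2 * a * log 2 + 2 * (a * log a) := by
  rcases eq_or_ne a 0 with rfl | ha
  · simp
  · rw [log_mul two_ne_zero ha]
    ring

lemma entropyGap_one_sub_two_mul (t : ℝ) :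
    entropyGap (1 - 2 * t) = 2 * log 2 - 2 * (-(t * log t) - (1 - t) * log (1 - t)) := by
  have h₁ := two_mul_mul_log_two_mul (1 - t)
  have h₂ := two_mul_mul_log_two_mul t
  rw [entropyGap, show 1 + (1 - 2 * t) = 2 * (1 - t) by ring, show 1 - (1 - 2 * t) = 2 * t by ring]
  linarith

lemma four_mul_log_two_mul_mul_one_sub_le {t : ℝ} (ht : t ∈ Icc (0 : ℝ) 1) :
    4 * log 2 * (t * (1 - t)) ≤ -(t * log t) - (1 - t) * log (1 - t) := by
  have hx : |1 - 2 * t| ≤ 1 := abs_le.2 ⟨by linarith [ht.2], by linarith [ht.1]⟩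
  have h := entropyGap_le hx
  rw [entropyGap_one_sub_two_mul] at h
  nlinarith [log_pos one_lt_two]

lemma neg_log_le_two_mul_log_two_mul_one_sub {s : ℝ} (hs : s ∈ Icc (1 / 2 : ℝ) 1) :
    -log s ≤ 2 * log 2 * (1 - s) := by
  -- `s` is the convex combination `2(1-s) · (1/2) + (2s-1) · 1`
  have hchord := strictConcaveOn_log_Ioi.concaveOn.2 (show (1 / 2 : ℝ) ∈ Ioi 0 by norm_num)
    (show (1 : ℝ) ∈ Ioi 0 by norm_num) (show 0 ≤ 2 * (1 - s) by linarith [hs.2])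
    (show 0 ≤ 2 * s - 1 by linarith [hs.1]) (by ring)
  simp only [smul_eq_mul] at hchord
  rw [show 2 * (1 - s) * (1 / 2) + (2 * s - 1) * 1 = s by ring,
    one_div, log_inv, log_one] at hchord
  linarith

end EntropyChain

/-- The chain of inequalities `2t(1-t) ≤ η₂(t) ≤ (4 ln 2)·t(1-t) ≤ η(t)` for `t ∈ [0,1]`,
where `η(t) = -t ln t - (1-t) ln(1-t)` (binary entropy, `η(0)=η(1)=0` since
`Real.log 0 = 0`) and `η₂(t) = -ln(t² + (1-t)²)`. -/
theorem entropy_chain_two (t : ℝ) (ht : t ∈ Set.Icc (0 : ℝ) 1) :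
    2 * t * (1 - t) ≤ -Real.log (t ^ 2 + (1 - t) ^ 2) ∧
    -Real.log (t ^ 2 + (1 - t) ^ 2) ≤ 4 * Real.log 2 * (t * (1 - t)) ∧
    4 * Real.log 2 * (t * (1 - t)) ≤ -(t * Real.log t) - (1 - t) * Real.log (1 - t) := by
  have hs : t ^ 2 + (1 - t) ^ 2 = 1 - 2 * t * (1 - t) := by ring
  have hprod : 0 ≤ t * (1 - t) ∧ t * (1 - t) ≤ 1 / 4 :=
    ⟨mul_nonneg ht.1 (sub_nonneg.2 ht.2), by nlinarith [sq_nonneg (2 * t - 1)]⟩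
  refine ⟨?_, ?_, EntropyChain.four_mul_log_two_mul_mul_one_sub_le ht⟩
  · linarith [log_le_sub_one_of_pos (show 0 < t ^ 2 + (1 - t) ^ 2 by linarith)]
  · have := EntropyChain.neg_log_le_two_mul_log_two_mul_one_sub
      (show t ^ 2 + (1 - t) ^ 2 ∈ Icc (1 / 2 : ℝ) 1 from ⟨by linarith, by linarith⟩)
    linarith
end

section
/- Let η_β(t) = (1/(1-β)) ln(t^β + (1-t)^β) and define η̃_β(ξ) = (1/(4π²)) ∫₀¹ (η_β(tξ) - t η_β(ξ)) / (t(1-t)) dt. Then η̃_β(1) = (1+β)/(24β) for every β ∈ (0,∞)\{1}. -/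
/-!
Since `η_β(1) = 0`, the transform at `1` is `(4π²(1-β))⁻¹ ∫₀¹ log(t^β + (1-t)^β) / (t(1-t)) dt`.
The integrand is symmetric under `t ↦ 1 - t`, and on `(0, 1/2)` the substitution `t = u/(1+u)`
turns `dt / (t(1-t))` into `du / u` and the logarithm into `log(1 + u^β) - β log(1 + u)`.
The substitution `v = u^β` gives `∫₀¹ log(1 + u^β)/u du = β⁻¹ ∫₀¹ log(1 + v)/v dv`, and integrating
the power series of `log(1 + v)/v` termwise gives `∑ (-1)ⁿ/(n+1)² = ζ(2)/2 = π²/12`.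
Altogether the integral is `2 (π²/12)(β⁻¹ - β) = π²(1 - β²)/(6β)`.
-/

open Real MeasureTheory Set

section ChangeOfVariables

variable {E : Type*} [NormedAddCommGroup E] [NormedSpace ℝ E]

theorem rpow_image_Ioo_zero_one {p : ℝ} (hp : 0 < p) :
    (fun x : ℝ => x ^ p) '' Ioo 0 1 = Ioo 0 1 := by
  ext y
  constructor
  · rintro ⟨x, ⟨hx0, hx1⟩, rfl⟩
    exact ⟨rpow_pos_of_pos hx0 p, rpow_lt_one hx0.le hx1 hp⟩
  · rintro ⟨hy0, hy1⟩
    exact ⟨y ^ p⁻¹, ⟨rpow_pos_of_pos hy0 _, rpow_lt_one hy0.le hy1 (inv_pos.mpr hp)⟩,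
      rpow_inv_rpow hy0.le hp.ne'⟩

theorem integral_comp_rpow_Ioo_zero_one_of_pos {p : ℝ} (hp : 0 < p) (g : ℝ → E) :
    ∫ x in Ioo (0 : ℝ) 1, (p * x ^ (p - 1)) • g (x ^ p) = ∫ y in Ioo (0 : ℝ) 1, g y := by
  have h := integral_image_eq_integral_abs_deriv_smul measurableSet_Ioo
    (fun x (hx : x ∈ Ioo (0 : ℝ) 1) => (hasDerivAt_rpow_const (Or.inl hx.1.ne')).hasDerivWithinAt)
    ((rpow_left_injOn hp.ne').mono fun x (hx : x ∈ Ioo (0 : ℝ) 1) => hx.1.le) g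
  rw [rpow_image_Ioo_zero_one hp] at h
  rw [h]
  refine setIntegral_congr_fun measurableSet_Ioo fun x (hx : x ∈ Ioo (0 : ℝ) 1) => ?_
  rw [abs_of_pos (mul_pos hp (rpow_pos_of_pos hx.1 _))]

theorem div_one_add_image_Ioo_zero_one :
    (fun u : ℝ => u / (1 + u)) '' Ioo 0 1 = Ioo 0 (1 / 2) := by
  ext t
  constructor
  · rintro ⟨u, ⟨hu0, hu1⟩, rfl⟩
    have h1u : 0 < 1 + u := by linarith
    exact ⟨by positivity, by rw [div_lt_iff₀ h1u]; linarith⟩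
  · rintro ⟨ht0, ht1⟩
    have h1t : 0 < 1 - t := by linarith
    refine ⟨t / (1 - t), ⟨by positivity, by rw [div_lt_one h1t]; linarith⟩, ?_⟩
    field_simp
    ring

theorem injOn_div_one_add : InjOn (fun u : ℝ => u / (1 + u)) (Ioi 0) := by
  intro a (ha : 0 < a) b (hb : 0 < b) h
  have h1a : 1 + a ≠ 0 := by positivity
  have h1b : 1 + b ≠ 0 := by positivity
  field_simp at h
  linarith

theorem hasDerivAt_div_one_add {u : ℝ} (hu : 1 + u ≠ 0) :
    HasDerivAt (fun u : ℝ => u / (1 + u)) (1 / (1 + u) ^ 2) u :=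
  ((hasDerivAt_id' u).div ((hasDerivAt_id' u).const_add 1) hu).congr_deriv (by ring)

theorem hasDerivWithinAt_div_one_add_Ioo :
    ∀ u ∈ Ioo (0 : ℝ) 1,
      HasDerivWithinAt (fun u : ℝ => u / (1 + u)) (1 / (1 + u) ^ 2) (Ioo 0 1) u :=
  fun u hu => (hasDerivAt_div_one_add (by linarith [hu.1])).hasDerivWithinAt

theorem integral_comp_div_one_add_Ioo_zero_one (g : ℝ → E) :
    ∫ u in Ioo (0 : ℝ) 1, (1 / (1 + u) ^ 2) • g (u / (1 + u))
      = ∫ t in Ioo (0 : ℝ) (1 / 2), g t := by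
  have h := integral_image_eq_integral_abs_deriv_smul measurableSet_Ioo
    hasDerivWithinAt_div_one_add_Ioo (injOn_div_one_add.mono Ioo_subset_Ioi_self) g
  rw [div_one_add_image_Ioo_zero_one] at h
  rw [h]
  refine setIntegral_congr_fun measurableSet_Ioo fun u _ => ?_
  rw [abs_of_nonneg (by positivity)]

theorem integrableOn_comp_div_one_add_Ioo_zero_one_iff (g : ℝ → E) :
    IntegrableOn (fun u => (1 / (1 + u) ^ 2) • g (u / (1 + u))) (Ioo 0 1) ↔
      IntegrableOn g (Ioo 0 (1 / 2)) := by
  have h := integrableOn_image_iff_integrableOn_abs_deriv_smul measurableSet_Ioo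
    hasDerivWithinAt_div_one_add_Ioo (injOn_div_one_add.mono Ioo_subset_Ioi_self) g
  rw [div_one_add_image_Ioo_zero_one] at h
  rw [h]
  refine integrableOn_congr_fun (fun u _ => ?_) measurableSet_Ioo
  rw [abs_of_nonneg (by positivity)]

theorem intervalIntegral.integral_eq_two_smul_integral_half_of_symm {g : ℝ → E} {a : ℝ}
    (hg : ∀ x, g (a - x) = g x) (hint : IntervalIntegrable g volume 0 (a / 2)) :
    ∫ x in 0..a, g x = (2 : ℝ) • ∫ x in 0..a / 2, g x := by
  have hhalf : a - a / 2 = a / 2 := by ring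
  have hint' : IntervalIntegrable g volume (a / 2) a := by
    have h := hint.comp_sub_left a
    simp only [hg, sub_zero, hhalf] at h
    exact h.symm
  have hreflect : ∫ x in a / 2..a, g x = ∫ x in 0..a / 2, g x := by
    have h := intervalIntegral.integral_comp_sub_left (a := 0) (b := a / 2) g a
    simp only [hg, sub_zero, hhalf] at h
    exact h.symm
  rw [← intervalIntegral.integral_add_adjacent_intervals hint hint', hreflect, two_smul]

end ChangeOfVariables

theorem hasSum_one_div_nat_add_one_sq :
    HasSum (fun n : ℕ => 1 / ((n : ℝ) + 1) ^ 2) (π ^ 2 / 6) := by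
  simpa using (hasSum_nat_add_iff' 1).mpr hasSum_zeta_two

theorem hasSum_neg_one_pow_div_nat_add_one_sq :
    HasSum (fun n : ℕ => (-1) ^ n / ((n : ℝ) + 1) ^ 2) (π ^ 2 / 12) := by
  set a : ℕ → ℝ := fun n => 1 / ((n : ℝ) + 1) ^ 2 with ha
  have hζ : HasSum a (π ^ 2 / 6) := hasSum_one_div_nat_add_one_sq
  have hodd : HasSum (fun k => a (2 * k + 1)) (π ^ 2 / 24) := by
    have h : (fun k => a (2 * k + 1)) = fun k => a k / 4 := by
      ext k; simp only [ha]; push_cast; field_simp; ring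
    rw [h, show π ^ 2 / 24 = π ^ 2 / 6 / 4 by ring]
    exact hζ.div_const 4
  obtain ⟨s, heven⟩ : Summable fun k => a (2 * k) :=
    hζ.summable.comp_injective (mul_right_injective₀ two_ne_zero)
  have hs : s + π ^ 2 / 24 = π ^ 2 / 6 := (HasSum.even_add_odd (f := a) heven hodd).unique hζ
  rw [show π ^ 2 / 12 = s + -(π ^ 2 / 24) by linarith]
  refine HasSum.even_add_odd ?_ ?_
  · convert heven using 2 with k
    simp [ha, pow_mul]
  · simpa [ha, pow_succ, pow_mul, neg_div] using hodd.neg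

theorem integral_Ioo_zero_one_pow_div (n : ℕ) :
    ∫ x in Ioo (0 : ℝ) 1, x ^ n / ((n : ℝ) + 1) = 1 / ((n : ℝ) + 1) ^ 2 := by
  rw [← integral_Ioc_eq_integral_Ioo, ← intervalIntegral.integral_of_le zero_le_one,
    intervalIntegral.integral_div, integral_pow]
  field_simp
  simp

theorem hasSum_log_one_add_div {x : ℝ} (hx0 : x ≠ 0) (hx : |x| < 1) :
    HasSum (fun n : ℕ => (-1) ^ n * (x ^ n / ((n : ℝ) + 1))) (log (1 + x) / x) := by
  have h := ((hasSum_pow_div_log_of_abs_lt_one (x := -x) (by rwa [abs_neg])).neg).div_const x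
  rw [sub_neg_eq_add, neg_neg] at h
  refine h.congr_fun fun n => ?_
  rw [neg_pow, pow_succ]
  field_simp
  ring

theorem integral_log_one_add_div :
    ∫ x in Ioo (0 : ℝ) 1, log (1 + x) / x = π ^ 2 / 12 := by
  set F : ℕ → ℝ → ℝ := fun n x => (-1) ^ n * (x ^ n / ((n : ℝ) + 1))
  have hF_int : ∀ n, IntegrableOn (F n) (Ioo 0 1) := fun n =>
    (((intervalIntegrable_iff_integrableOn_Ioo_of_le zero_le_one).mp
      (intervalIntegral.intervalIntegrable_pow n)).div_const _).const_mul _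
  have hF_norm : ∀ n, ∫ x in Ioo (0 : ℝ) 1, ‖F n x‖ = 1 / ((n : ℝ) + 1) ^ 2 := by
    intro n
    rw [← integral_Ioo_zero_one_pow_div n]
    refine setIntegral_congr_fun measurableSet_Ioo fun x hx => ?_
    simp [F, abs_of_pos hx.1, abs_of_pos (Nat.cast_add_one_pos (α := ℝ) n)]
  have hF_val : ∀ n, ∫ x in Ioo (0 : ℝ) 1, F n x = (-1) ^ n / ((n : ℝ) + 1) ^ 2 := by
    intro n
    rw [integral_const_mul, integral_Ioo_zero_one_pow_div]
    ring
  have hsum := hasSum_integral_of_summable_integral_norm hF_int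
    (by simpa only [hF_norm] using hasSum_one_div_nat_add_one_sq.summable)
  simp only [hF_val] at hsum
  rw [setIntegral_congr_fun measurableSet_Ioo fun x hx =>
    (hasSum_log_one_add_div hx.1.ne' (by rw [abs_of_pos hx.1]; exact hx.2)).tsum_eq.symm]
  exact hsum.unique hasSum_neg_one_pow_div_nat_add_one_sq

theorem integrableOn_log_one_add_rpow_div {p : ℝ} (hp : 0 < p) :
    IntegrableOn (fun x : ℝ => log (1 + x ^ p) / x) (Ioo 0 1) := by
  have hbound : IntegrableOn (fun x : ℝ => x ^ (p - 1)) (Ioo 0 1) :=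
    (intervalIntegrable_iff_integrableOn_Ioo_of_le zero_le_one).mp
      (intervalIntegral.intervalIntegrable_rpow' (by linarith))
  refine hbound.mono' (Measurable.aestronglyMeasurable (by fun_prop))
    ((ae_restrict_iff' measurableSet_Ioo).mpr (Filter.Eventually.of_forall fun x hx => ?_))
  have hxp : 0 < x ^ p := rpow_pos_of_pos hx.1 p
  have hlog : log (1 + x ^ p) ≤ x ^ p := by
    linarith [log_le_sub_one_of_pos (by positivity : 0 < 1 + x ^ p)]
  rw [norm_of_nonneg (div_nonneg (log_nonneg (by linarith)) hx.1.le), rpow_sub_one hx.1.ne']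
  exact div_le_div_of_nonneg_right hlog hx.1.le

theorem integrableOn_log_one_add_div :
    IntegrableOn (fun x : ℝ => log (1 + x) / x) (Ioo 0 1) := by
  simpa using integrableOn_log_one_add_rpow_div one_pos

theorem integral_log_one_add_rpow_div {p : ℝ} (hp : 0 < p) :
    ∫ x in Ioo (0 : ℝ) 1, log (1 + x ^ p) / x = π ^ 2 / (12 * p) := by
  have hchange : ∀ x ∈ Ioo (0 : ℝ) 1,
      (p * x ^ (p - 1)) • (log (1 + x ^ p) / x ^ p) = p * (log (1 + x ^ p) / x) := by
    intro x hx
    have hxp : 0 < x ^ p := rpow_pos_of_pos hx.1 p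
    rw [smul_eq_mul, rpow_sub_one hx.1.ne']
    field_simp
  have h := integral_comp_rpow_Ioo_zero_one_of_pos hp fun y => log (1 + y) / y
  rw [integral_log_one_add_div, setIntegral_congr_fun measurableSet_Ioo hchange,
    integral_const_mul] at h
  rw [eq_div_iff (by positivity)]
  linarith

theorem log_rpow_add_one_sub_rpow_comp_div_one_add (β : ℝ) {u : ℝ} (hu : 0 < u) :
    (1 / (1 + u) ^ 2) *
        (log ((u / (1 + u)) ^ β + (1 - u / (1 + u)) ^ β) / (u / (1 + u) * (1 - u / (1 + u))))
      = log (1 + u ^ β) / u - β * (log (1 + u) / u) := by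
  have h1u : 0 < 1 + u := by linarith
  have hsub : 1 - u / (1 + u) = 1 / (1 + u) := by field_simp; ring
  have hsum : (u / (1 + u)) ^ β + (1 / (1 + u)) ^ β = (1 + u ^ β) / (1 + u) ^ β := by
    rw [div_rpow hu.le h1u.le, div_rpow zero_le_one h1u.le, one_rpow, add_comm, add_div]
  have hlog : log ((1 + u ^ β) / (1 + u) ^ β) = log (1 + u ^ β) - β * log (1 + u) := by
    rw [log_div (by positivity) (by positivity), log_rpow h1u]
  rw [hsub, hsum, hlog]
  field_simp

theorem integrableOn_log_rpow_add_rpow_one_sub_div_Ioo_zero_half {β : ℝ} (hβ : 0 < β) :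
    IntegrableOn (fun t : ℝ => log (t ^ β + (1 - t) ^ β) / (t * (1 - t))) (Ioo 0 (1 / 2)) := by
  rw [← integrableOn_comp_div_one_add_Ioo_zero_one_iff]
  simp only [smul_eq_mul]
  rw [integrableOn_congr_fun
    (fun u hu => log_rpow_add_one_sub_rpow_comp_div_one_add β hu.1) measurableSet_Ioo]
  exact (integrableOn_log_one_add_rpow_div hβ).sub (integrableOn_log_one_add_div.const_mul β)

theorem integral_log_rpow_add_rpow_one_sub_div_Ioo_zero_half {β : ℝ} (hβ : 0 < β) :
    ∫ t in Ioo (0 : ℝ) (1 / 2), log (t ^ β + (1 - t) ^ β) / (t * (1 - t))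
      = π ^ 2 * (1 - β ^ 2) / (12 * β) := by
  rw [← integral_comp_div_one_add_Ioo_zero_one]
  simp only [smul_eq_mul]
  rw [setIntegral_congr_fun measurableSet_Ioo
    (fun u hu => log_rpow_add_one_sub_rpow_comp_div_one_add β hu.1),
    integral_sub (integrableOn_log_one_add_rpow_div hβ) (integrableOn_log_one_add_div.const_mul β),
    integral_const_mul, integral_log_one_add_rpow_div hβ, integral_log_one_add_div]
  field_simp

theorem integral_log_rpow_add_rpow_one_sub_div {β : ℝ} (hβ : 0 < β) :
    ∫ t in (0 : ℝ)..1, log (t ^ β + (1 - t) ^ β) / (t * (1 - t))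
      = π ^ 2 * (1 - β ^ 2) / (6 * β) := by
  have hsymm : ∀ t : ℝ, log ((1 - t) ^ β + (1 - (1 - t)) ^ β) / ((1 - t) * (1 - (1 - t)))
      = log (t ^ β + (1 - t) ^ β) / (t * (1 - t)) := by
    intro t
    rw [sub_sub_cancel, add_comm, mul_comm]
  rw [intervalIntegral.integral_eq_two_smul_integral_half_of_symm hsymm
    ((intervalIntegrable_iff_integrableOn_Ioo_of_le (by norm_num)).mpr
      (integrableOn_log_rpow_add_rpow_one_sub_div_Ioo_zero_half hβ)),
    smul_eq_mul, intervalIntegral.integral_of_le (by norm_num), integral_Ioc_eq_integral_Ioo,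
    integral_log_rpow_add_rpow_one_sub_div_Ioo_zero_half hβ]
  ring

/-- The Widom transformation of the Rényi entropy function `η_β` evaluated at `ξ = 1`
equals `(1+β)/(24β)`, for every `β ∈ (0,∞)\{1}`. -/
theorem widom_transform_renyi (β : ℝ) (hβ : 0 < β) (hβ1 : β ≠ 1) :
    (1 / (4 * π ^ 2)) *
      ∫ t in (0 : ℝ)..1,
        ((1 / (1 - β)) * Real.log (t ^ β + (1 - t) ^ β)
          - t * ((1 / (1 - β)) * Real.log ((1 : ℝ) ^ β + (1 - (1 : ℝ)) ^ β)))
          / (t * (1 - t))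
    = (1 + β) / (24 * β) := by
  have hη_one : log ((1 : ℝ) ^ β + (1 - (1 : ℝ)) ^ β) = 0 := by
    rw [sub_self, zero_rpow hβ.ne', one_rpow, add_zero, log_one]
  have h1β : 1 - β ≠ 0 := sub_ne_zero.mpr hβ1.symm
  simp only [hη_one, mul_zero, sub_zero, mul_div_assoc]
  rw [intervalIntegral.integral_const_mul, integral_log_rpow_add_rpow_one_sub_div hβ]
  field_simp
  ring
end

section
/- Let D be a self-adjoint operator with 0 ≤ D ≤ 1 on a Hilbert space such that D(1-D) is trace class. Then 2 tr(D(1-D)) ≤ tr η_2(D) ≤ (4 ln 2) tr(D(1-D)) ≤ tr η(D), where η_2(t) = -ln(t²+(1-t)²) and η(t) is the binary entropy function. -/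
/-!
All three inequalities hold between scalar functions on `[0, 1]`. They pass to `D` by monotonicity
of the continuous functional calculus, since the spectrum of `D` lies in `[0, 1]`, and then to the
diagonal sums, since `A ≤ B` gives `re ⟪A x, x⟫ ≤ re ⟪B x, x⟫` for every vector `x`.

For the scalar inequalities put `s = t (1 - t) ∈ [0, 1/4]`, so that `t² + (1 - t)² = 1 - 2s`: the
lower bound for `η₂` is `log x ≤ x - 1`, and the upper bound is concavity of `log` on the chord from
`1` to `1/2`. For the entropy, expand `-t log t = t ∑ (1 - t)ⁿ⁺¹ / (n + 1)` and
`log 2 = ∑ (1/2)ⁿ⁺¹ / (n + 1)`; the terms then compare by the power-mean inequality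
`((a + b) / 2)ⁿ ≤ (aⁿ + bⁿ) / 2` applied to `a = t`, `b = 1 - t`.
-/

open scoped InnerProductSpace

namespace Real

lemma sq_add_one_sub_sq_pos (t : ℝ) : 0 < t ^ 2 + (1 - t) ^ 2 := by
  nlinarith [sq_nonneg (2 * t - 1)]

lemma two_mul_mul_one_sub_le_neg_log (t : ℝ) :
    2 * (t * (1 - t)) ≤ -log (t ^ 2 + (1 - t) ^ 2) := by
  linarith [log_le_sub_one_of_pos (sq_add_one_sub_sq_pos t)]

lemma neg_log_le_four_mul_log_two_mul {t : ℝ} (ht : t ∈ Set.Icc (0 : ℝ) 1) :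
    -log (t ^ 2 + (1 - t) ^ 2) ≤ 4 * log 2 * (t * (1 - t)) := by
  obtain ⟨ht0, ht1⟩ := ht
  set s := t * (1 - t)
  have hs0 : 0 ≤ 4 * s := by positivity
  have hs1 : 0 ≤ 1 - 4 * s := by nlinarith [sq_nonneg (2 * t - 1)]
  have hconc := strictConcaveOn_log_Ioi.concaveOn.2 (Set.mem_Ioi.2 one_pos)
    (Set.mem_Ioi.2 (by norm_num : (0 : ℝ) < 1 / 2)) hs1 hs0 (by ring)
  have hcomb : (1 - 4 * s) • (1 : ℝ) + (4 * s) • (1 / 2 : ℝ) = t ^ 2 + (1 - t) ^ 2 := by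
    simp only [smul_eq_mul, s]; ring
  rw [hcomb, smul_eq_mul, smul_eq_mul, log_one, one_div, log_inv] at hconc
  linarith

lemma add_div_two_pow_le_add_pow_div_two {a b : ℝ} (ha : 0 ≤ a) (hb : 0 ≤ b) (n : ℕ) :
    ((a + b) / 2) ^ n ≤ (a ^ n + b ^ n) / 2 := by
  have := (convexOn_pow n).2 ha hb (by norm_num) (by norm_num)
    (by norm_num : (1 / 2 : ℝ) + 1 / 2 = 1)
  simp only [smul_eq_mul] at this
  calc ((a + b) / 2) ^ n = (1 / 2 * a + 1 / 2 * b) ^ n := by ring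
    _ ≤ 1 / 2 * a ^ n + 1 / 2 * b ^ n := this
    _ = (a ^ n + b ^ n) / 2 := by ring

lemma hasSum_negMulLog {t : ℝ} (ht0 : 0 < t) (ht2 : t < 2) :
    HasSum (fun n : ℕ => t * (1 - t) ^ (n + 1) / (n + 1)) (negMulLog t) := by
  have habs : |1 - t| < 1 := abs_sub_lt_iff.2 ⟨by linarith, by linarith⟩
  have := (hasSum_pow_div_log_of_abs_lt_one habs).mul_left t
  simp only [sub_sub_cancel, mul_neg, ← mul_div_assoc] at this
  simpa [negMulLog, neg_mul] using this

lemma four_mul_log_two_mul_le_binEntropy {t : ℝ} (ht : t ∈ Set.Icc (0 : ℝ) 1) :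
    4 * log 2 * (t * (1 - t)) ≤ binEntropy t := by
  obtain ⟨ht0, ht1⟩ := ht
  rcases ht0.eq_or_lt with rfl | ht0
  · simp
  rcases ht1.eq_or_lt with rfl | ht1
  · simp
  have hlog2 : HasSum (fun n : ℕ => (1 / 2 : ℝ) ^ (n + 1) / (n + 1)) (log 2) := by
    have h := hasSum_pow_div_log_of_abs_lt_one (x := 1 / 2) (by norm_num [abs_of_pos])
    rwa [show (1 : ℝ) - 1 / 2 = 2⁻¹ by norm_num, log_inv, neg_neg] at h
  rw [binEntropy_eq_negMulLog_add_negMulLog_one_sub,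
    show 4 * log 2 * (t * (1 - t)) = 4 * (t * (1 - t)) * log 2 by ring]
  refine hasSum_le (fun n => ?_) (hlog2.mul_left _)
    ((hasSum_negMulLog ht0 (by linarith)).add (hasSum_negMulLog (by linarith) (by linarith)))
  have hmean := add_div_two_pow_le_add_pow_div_two ht0.le (sub_nonneg.2 ht1.le) n
  simp only [add_sub_cancel, sub_sub_cancel] at hmean ⊢
  rw [← add_div, ← mul_div_assoc]
  gcongr
  have htq : 0 ≤ t * (1 - t) := mul_nonneg ht0.le (by linarith)
  calc 4 * (t * (1 - t)) * (1 / 2) ^ (n + 1) = 2 * (t * (1 - t)) * (1 / 2) ^ n := by ring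
    _ ≤ 2 * (t * (1 - t)) * ((t ^ n + (1 - t) ^ n) / 2) := by gcongr
    _ = t * (1 - t) ^ (n + 1) + (1 - t) * t ^ (n + 1) := by ring

end Real

section CFC

variable {A : Type*} [CStarAlgebra A] {a : A}

lemma smul_mul_one_sub_eq_cfc (c : ℝ) (ha : IsSelfAdjoint a) :
    c • (a * (1 - a)) = cfc (fun t : ℝ => c * (t * (1 - t))) a := by
  rw [cfc_const_mul .., cfc_mul .., cfc_sub .., cfc_const_one .., cfc_id' ..]

variable [PartialOrder A] [StarOrderedRing A]

lemma spectrum_subset_Icc_of_nonneg_of_le_one (h0 : 0 ≤ a) (h1 : a ≤ 1) :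
    spectrum ℝ a ⊆ Set.Icc 0 1 :=
  fun _ hx => ⟨spectrum_nonneg_of_nonneg h0 hx, (CFC.le_one_iff a).mp h1 _ hx⟩

lemma cfc_le_cfc_of_le_on_Icc (h0 : 0 ≤ a) (h1 : a ≤ 1) {f g : ℝ → ℝ}
    (hfg : ∀ t ∈ Set.Icc (0 : ℝ) 1, f t ≤ g t) (hf : ContinuousOn f (Set.Icc 0 1))
    (hg : ContinuousOn g (Set.Icc 0 1)) : cfc f a ≤ cfc g a :=
  have hspec := spectrum_subset_Icc_of_nonneg_of_le_one h0 h1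
  cfc_mono (fun t ht => hfg t (hspec ht)) (hf.mono hspec) (hg.mono hspec)

lemma smul_mul_one_sub_le_cfc (h0 : 0 ≤ a) (h1 : a ≤ 1) {c : ℝ} {f : ℝ → ℝ}
    (hf : ∀ t ∈ Set.Icc (0 : ℝ) 1, c * (t * (1 - t)) ≤ f t)
    (hf_cont : ContinuousOn f (Set.Icc 0 1)) : c • (a * (1 - a)) ≤ cfc f a := by
  rw [smul_mul_one_sub_eq_cfc c (IsSelfAdjoint.of_nonneg h0)]
  exact cfc_le_cfc_of_le_on_Icc h0 h1 hf (by fun_prop) hf_cont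

lemma cfc_le_smul_mul_one_sub (h0 : 0 ≤ a) (h1 : a ≤ 1) {c : ℝ} {f : ℝ → ℝ}
    (hf : ∀ t ∈ Set.Icc (0 : ℝ) 1, f t ≤ c * (t * (1 - t)))
    (hf_cont : ContinuousOn f (Set.Icc 0 1)) : cfc f a ≤ c • (a * (1 - a)) := by
  rw [smul_mul_one_sub_eq_cfc c (IsSelfAdjoint.of_nonneg h0)]
  exact cfc_le_cfc_of_le_on_Icc h0 h1 hf hf_cont (by fun_prop)

end CFC

section DiagonalSum

variable {H ι : Type*} [NormedAddCommGroup H] [InnerProductSpace ℂ H]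

noncomputable def diagonalSum (v : ι → H) (T : H →L[ℂ] H) : ENNReal :=
  ∑' i, ENNReal.ofReal (⟪T (v i), v i⟫_ℂ).re

lemma diagonalSum_mono (v : ι → H) {S T : H →L[ℂ] H} (hST : S ≤ T) :
    diagonalSum v S ≤ diagonalSum v T := by
  refine ENNReal.tsum_le_tsum fun i => ENNReal.ofReal_le_ofReal ?_
  have := hST.re_inner_nonneg_left (v i)
  rw [sub_apply, inner_sub_left, map_sub, sub_nonneg] at this
  exact this

lemma diagonalSum_smul (v : ι → H) (T : H →L[ℂ] H) {c : ℝ} (hc : 0 ≤ c) :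
    diagonalSum v (c • T) = ENNReal.ofReal c * diagonalSum v T := by
  simp_rw [diagonalSum, ← ENNReal.tsum_mul_left, ← ENNReal.ofReal_mul hc,
    smul_apply, RCLike.real_smul_eq_coe_smul (K := ℂ), inner_smul_real_left, Complex.real_smul,
    Complex.re_ofReal_mul]

end DiagonalSum

theorem variance_entropy_trace_bounds_general {H : Type*} [NormedAddCommGroup H]
    [InnerProductSpace ℂ H] [CompleteSpace H] {ι : Type*}
    (D : H →L[ℂ] H) (h0 : 0 ≤ D) (h1 : D ≤ 1)
    (e : HilbertBasis ι ℂ H) :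
    2 * (∑' i, ENNReal.ofReal (⟪(D * (1 - D)) (e i), e i⟫_ℂ).re)
      ≤ (∑' i, ENNReal.ofReal
          (⟪(cfc (fun t : ℝ => -Real.log (t ^ 2 + (1 - t) ^ 2)) D) (e i), e i⟫_ℂ).re) ∧
    (∑' i, ENNReal.ofReal
        (⟪(cfc (fun t : ℝ => -Real.log (t ^ 2 + (1 - t) ^ 2)) D) (e i), e i⟫_ℂ).re)
      ≤ ENNReal.ofReal (4 * Real.log 2) *
          ∑' i, ENNReal.ofReal (⟪(D * (1 - D)) (e i), e i⟫_ℂ).re ∧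
    ENNReal.ofReal (4 * Real.log 2) *
        (∑' i, ENNReal.ofReal (⟪(D * (1 - D)) (e i), e i⟫_ℂ).re)
      ≤ ∑' i, ENNReal.ofReal
          (⟪(cfc (fun t : ℝ => -(t * Real.log t) - (1 - t) * Real.log (1 - t)) D)
            (e i), e i⟫_ℂ).re := by
  have hη : (fun t : ℝ => -(t * Real.log t) - (1 - t) * Real.log (1 - t)) = Real.binEntropy := by
    ext t; simp only [Real.binEntropy_eq_negMulLog_add_negMulLog_one_sub, Real.negMulLog]; ring
  have hη₂ : Continuous fun t : ℝ => -Real.log (t ^ 2 + (1 - t) ^ 2) :=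
    ((by fun_prop : Continuous fun t : ℝ => t ^ 2 + (1 - t) ^ 2).log
      fun t => (Real.sq_add_one_sub_sq_pos t).ne').neg
  have hlog2 : 0 ≤ 4 * Real.log 2 := by positivity
  rw [hη, ← ENNReal.ofReal_ofNat 2]
  refine ⟨?_, ?_, ?_⟩
  · exact (diagonalSum_smul e _ zero_le_two).symm.trans_le <| diagonalSum_mono e <|
      smul_mul_one_sub_le_cfc h0 h1 (fun t _ => Real.two_mul_mul_one_sub_le_neg_log t)
        hη₂.continuousOn
  · exact (diagonalSum_mono e <| cfc_le_smul_mul_one_sub h0 h1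
      (fun t ht => Real.neg_log_le_four_mul_log_two_mul ht) hη₂.continuousOn).trans_eq
        (diagonalSum_smul e _ hlog2)
  · exact (diagonalSum_smul e _ hlog2).symm.trans_le <| diagonalSum_mono e <|
      smul_mul_one_sub_le_cfc h0 h1 (fun t ht => Real.four_mul_log_two_mul_le_binEntropy ht)
        Real.binEntropy_continuous.continuousOn

/-- If `D` is self-adjoint with `0 ≤ D ≤ 1` and `D(1-D)` is trace class, then
`2 tr D(1-D) ≤ tr η₂(D) ≤ (4 ln 2) tr D(1-D) ≤ tr η(D)`, where
`η₂(t) = -ln(t²+(1-t)²)` and `η` is the binary entropy function; the trace is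
the (extended-real) sum of diagonal matrix elements in a Hilbert basis. -/
theorem variance_entropy_trace_bounds {H : Type*} [NormedAddCommGroup H]
    [InnerProductSpace ℂ H] [CompleteSpace H] {ι : Type*}
    (D : H →L[ℂ] H) (hsa : IsSelfAdjoint D) (h0 : 0 ≤ D) (h1 : D ≤ 1)
    (e : HilbertBasis ι ℂ H)
    (htr : ∑' i, ENNReal.ofReal (⟪(D * (1 - D)) (e i), e i⟫_ℂ).re < ⊤) :
    2 * (∑' i, ENNReal.ofReal (⟪(D * (1 - D)) (e i), e i⟫_ℂ).re)
      ≤ (∑' i, ENNReal.ofReal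
          (⟪(cfc (fun t : ℝ => -Real.log (t ^ 2 + (1 - t) ^ 2)) D) (e i), e i⟫_ℂ).re) ∧
    (∑' i, ENNReal.ofReal
        (⟪(cfc (fun t : ℝ => -Real.log (t ^ 2 + (1 - t) ^ 2)) D) (e i), e i⟫_ℂ).re)
      ≤ ENNReal.ofReal (4 * Real.log 2) *
          ∑' i, ENNReal.ofReal (⟪(D * (1 - D)) (e i), e i⟫_ℂ).re ∧
    ENNReal.ofReal (4 * Real.log 2) *
        (∑' i, ENNReal.ofReal (⟪(D * (1 - D)) (e i), e i⟫_ℂ).re)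
      ≤ ∑' i, ENNReal.ofReal
          (⟪(cfc (fun t : ℝ => -(t * Real.log t) - (1 - t) * Real.log (1 - t)) D)
            (e i), e i⟫_ℂ).re :=
  variance_entropy_trace_bounds_general D h0 h1 e
end
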